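/- Let μ ∈ ℝ and σ > 0, and let f(x) = exp(−(ln x − μ)²/(2σ²)) / (x σ √(2π)) for x > 0 and f(x) = 0 otherwise, the density of the lognormal distribution with parameters μ and σ. Then −∫_ℝ f(x) log₂(|x| · f(x)) dx = log₂(σ · √(2πe)). In particular this value does not depend on μ. -/

import Mathlib

/-!
Substituting `x = exp y`, the factor `|x|` inside the logarithm is exactly the Jacobian, so the
floating-point entropy of a density supported on `(0, ∞)` is the differential entropy of the law
of its logarithm. For the lognormal density that law is the Gaussian `N(μ, σ²)`, whose entropy
`log₂ √(2πeσ²)` follows from `log p(y) = -log √(2πσ²) - (y - μ)² / (2σ²)` and `E[(Y - μ)²] = σ²`.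
-/

open Real MeasureTheory Set ProbabilityTheory
open scoped NNReal

namespace ProbabilityTheory

variable (μ : ℝ) {v : ℝ≥0}

lemma integrable_gaussianPDFReal_mul_sq_sub (hv : v ≠ 0) :
    Integrable (fun x ↦ gaussianPDFReal μ v x * (x - μ) ^ 2) := by
  have h : Integrable (fun x : ℝ ↦ (x - μ) ^ 2) (gaussianReal μ v) :=
    ((memLp_id_gaussianReal 2).sub (memLp_const μ)).integrable_sq
  rw [gaussianReal_of_var_ne_zero _ hv,
    integrable_withDensity_iff_integrable_smul' (measurable_gaussianPDF μ v)
      (ae_of_all _ fun _ ↦ gaussianPDF_lt_top)] at h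
  simpa [toReal_gaussianPDF] using h

lemma integral_gaussianPDFReal_mul_sq_sub (hv : v ≠ 0) :
    ∫ x, gaussianPDFReal μ v x * (x - μ) ^ 2 = v := by
  calc ∫ x, gaussianPDFReal μ v x * (x - μ) ^ 2
      = ∫ x, (x - μ) ^ 2 ∂gaussianReal μ v := (integral_gaussianReal_eq_integral_smul hv).symm
    _ = Var[fun x ↦ x; gaussianReal μ v] := by
      rw [variance_eq_integral measurable_id'.aemeasurable, integral_id_gaussianReal]
    _ = v := variance_fun_id_gaussianReal

lemma log_gaussianPDFReal (hv : v ≠ 0) (x : ℝ) :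
    log (gaussianPDFReal μ v x) = -log √(2 * π * v) - (x - μ) ^ 2 / (2 * v) := by
  rw [gaussianPDFReal, log_mul (by positivity) (exp_pos _).ne', log_inv, log_exp]
  ring

end ProbabilityTheory

theorem integral_exp_smul_comp_exp {E : Type*} [NormedAddCommGroup E] [NormedSpace ℝ E]
    (g : ℝ → E) : ∫ y, exp y • g (exp y) = ∫ x in Ioi 0, g x := by
  rw [← range_exp, ← image_univ]
  simpa [abs_of_pos (exp_pos _)] using (integral_image_eq_integral_abs_deriv_smul
    MeasurableSet.univ (fun y _ ↦ (hasDerivAt_exp y).hasDerivWithinAt) exp_injective.injOn g).symm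

noncomputable def diffEntropy (p : ℝ → ℝ) : ℝ := -∫ x, p x * logb 2 (p x)

noncomputable def fpEntropy (f : ℝ → ℝ) : ℝ := -∫ x, f x * logb 2 (|x| * f x)

theorem fpEntropy_eq_diffEntropy_comp_exp {f : ℝ → ℝ} (hf : ∀ x ≤ 0, f x = 0) :
    fpEntropy f = diffEntropy (fun y ↦ exp y * f (exp y)) := by
  have hsupp : ∀ x ∉ Ioi (0 : ℝ), f x * logb 2 (|x| * f x) = 0 := fun x hx ↦ by
    rw [hf x (not_lt.mp hx), zero_mul]
  rw [fpEntropy, diffEntropy, ← setIntegral_eq_integral_of_forall_compl_eq_zero hsupp,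
    ← integral_exp_smul_comp_exp]
  simp only [smul_eq_mul, abs_of_pos (exp_pos _), mul_assoc]

theorem diffEntropy_gaussianPDFReal (μ : ℝ) {v : ℝ≥0} (hv : v ≠ 0) :
    diffEntropy (gaussianPDFReal μ v) = logb 2 √(2 * π * exp 1 * v) := by
  have hpoint : ∀ x, gaussianPDFReal μ v x * logb 2 (gaussianPDFReal μ v x)
      = (-log √(2 * π * v) * gaussianPDFReal μ v x
          - (2 * (v : ℝ))⁻¹ * (gaussianPDFReal μ v x * (x - μ) ^ 2)) / log 2 := fun x ↦ by
    rw [logb, log_gaussianPDFReal μ hv]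
    ring
  have hsqrt : √(2 * π * exp 1 * v) = √(2 * π * v) * exp (1 / 2) := by
    rw [show 2 * π * exp 1 * v = 2 * π * v * exp 1 by ring, sqrt_mul (by positivity), exp_half]
  rw [diffEntropy, funext hpoint, integral_div,
    integral_sub ((integrable_gaussianPDFReal μ v).const_mul _)
      ((integrable_gaussianPDFReal_mul_sq_sub μ hv).const_mul _),
    integral_const_mul, integral_const_mul, integral_gaussianPDFReal_eq_one μ hv,
    integral_gaussianPDFReal_mul_sq_sub μ hv, hsqrt, logb,
    log_mul (by positivity) (exp_pos _).ne', log_exp]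
  field_simp
  ring

/-- Differential floating-point entropy of the lognormal
distribution. -/
theorem fp_entropy_lognormal
    (μ σ : ℝ) (hσ : 0 < σ)
    (f : ℝ → ℝ)
    (hf : ∀ x, f x = if 0 < x then
      Real.exp (-(Real.log x - μ) ^ 2 / (2 * σ ^ 2)) / (x * σ * Real.sqrt (2 * π))
      else 0) :
    -∫ x, f x * Real.logb 2 (|x| * f x)
      = Real.logb 2 (σ * Real.sqrt (2 * π * Real.exp 1)) := by
  have hsupp : ∀ x ≤ 0, f x = 0 := fun x hx ↦ by rw [hf, if_neg hx.not_gt]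
  have hσ2 : ((σ ^ 2).toNNReal : ℝ) = σ ^ 2 := coe_toNNReal _ (sq_nonneg σ)
  have hsqrt : ∀ c ≥ 0, √(c * (σ ^ 2).toNNReal) = σ * √c := fun c hc ↦ by
    rw [hσ2, sqrt_mul hc, sqrt_sq hσ.le, mul_comm]
  have hgauss : (fun y ↦ exp y * f (exp y)) = gaussianPDFReal μ (σ ^ 2).toNNReal := by
    ext y
    rw [hf, if_pos (exp_pos y), log_exp, gaussianPDFReal, hsqrt _ (by positivity), hσ2]
    field_simp
  calc -∫ x, f x * logb 2 (|x| * f x)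
      = diffEntropy (gaussianPDFReal μ (σ ^ 2).toNNReal) := by
        rw [← hgauss, ← fpEntropy_eq_diffEntropy_comp_exp hsupp, fpEntropy]
    _ = logb 2 (σ * √(2 * π * exp 1)) := by
        rw [diffEntropy_gaussianPDFReal μ (by simpa using hσ.ne'), hsqrt _ (by positivity)]
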